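/- For |x| < 1 and any y, e_q(x) · E_q(y) = ∑_{n=0}^∞ (x ⊕_q y)^n / (q;q)_n, where (x ⊕_q y)^n is the Hahn q-addition power. -/

import Mathlib

open Finset

noncomputable def qPochGen (Q a : ℝ) (n : ℕ) : ℝ := ∏ j ∈ Finset.range n, (1 - a * Q ^ j)

noncomputable def qPoch (q : ℝ) (n : ℕ) : ℝ := qPochGen q q n

/-- Hahn q-addition power (x ⊕_q y)^n -/
noncomputable def hahnAdd (q x y : ℝ) (n : ℕ) : ℝ :=
  qPoch q n * ∑ k ∈ Finset.range (n + 1),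
    q ^ (k * (k - 1) / 2) * x ^ (n - k) * y ^ k / (qPoch q k * qPoch q (n - k))

open Filter Topology

/-! Both factors converge absolutely by the ratio test, their ratios of consecutive terms being
`x / (1 - q ^ (n + 1)) → x` and `q ^ n y / (1 - q ^ (n + 1)) → 0`. The Cauchy product of the two
series then has `n`-th term `∑ₖ q^(k(k-1)/2) y^k x^(n-k) / ((q;q)_k (q;q)_(n-k))`, which is
`(x ⊕_q y)^n / (q;q)_n` by the definition of the Hahn power. -/

theorem summable_norm_of_ratio_tendsto {E : Type*} [SeminormedAddCommGroup E] [NormedSpace ℝ E]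
    {t : ℕ → E} {ρ : ℕ → ℝ} {L : ℝ} (hL : |L| < 1) (hρ : Tendsto ρ atTop (𝓝 L))
    (ht : ∀ n, t (n + 1) = ρ n • t n) : Summable fun n => ‖t n‖ := by
  obtain ⟨r, hLr, hr1⟩ := exists_between hL
  have hρr : ∀ᶠ n in atTop, |ρ n| ≤ r :=
    (hρ.abs.eventually (gt_mem_nhds hLr)).mono fun _ h => h.le
  refine summable_of_ratio_norm_eventually_le hr1 (hρr.mono fun n hn => ?_)
  rw [norm_norm, norm_norm, ht, norm_smul, Real.norm_eq_abs]
  exact mul_le_mul_of_nonneg_right hn (norm_nonneg _)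

section qPochhammer

variable {q : ℝ}

theorem qPoch_succ (n : ℕ) : qPoch q (n + 1) = qPoch q n * (1 - q ^ (n + 1)) := by
  simp [qPoch, qPochGen, prod_range_succ, pow_succ']

theorem one_sub_pow_succ_pos (hq : |q| < 1) (n : ℕ) : 0 < 1 - q ^ (n + 1) := by
  have : q ^ (n + 1) < 1 :=
    (le_abs_self _).trans_lt (by rw [abs_pow]; exact pow_lt_one₀ (abs_nonneg q) hq n.succ_ne_zero)
  linarith

theorem qPoch_pos (hq : |q| < 1) (n : ℕ) : 0 < qPoch q n := by
  induction n with
  | zero => simp [qPoch, qPochGen]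
  | succ n ih => rw [qPoch_succ]; exact mul_pos ih (one_sub_pow_succ_pos hq n)

theorem tendsto_one_sub_pow_succ (hq : |q| < 1) :
    Tendsto (fun n : ℕ => 1 - q ^ (n + 1)) atTop (𝓝 1) := by
  simpa using tendsto_const_nhds.sub
    ((tendsto_pow_atTop_nhds_zero_of_abs_lt_one hq).comp (tendsto_add_atTop_nat 1))

theorem summable_norm_smallQExp_term (hq : |q| < 1) {x : ℝ} (hx : |x| < 1) :
    Summable fun k : ℕ => ‖x ^ k / qPoch q k‖ := by
  have hlim : Tendsto (fun n : ℕ => x / (1 - q ^ (n + 1))) atTop (𝓝 x) := by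
    simpa [Pi.div_def] using tendsto_const_nhds.div (tendsto_one_sub_pow_succ hq) one_ne_zero
  refine summable_norm_of_ratio_tendsto hx hlim fun n => ?_
  have := (qPoch_pos hq n).ne'
  have := (one_sub_pow_succ_pos hq n).ne'
  rw [qPoch_succ, smul_eq_mul]
  field_simp
  ring

theorem summable_norm_bigQExp_term (hq : |q| < 1) (y : ℝ) :
    Summable fun k : ℕ => ‖q ^ (k * (k - 1) / 2) * y ^ k / qPoch q k‖ := by
  have hlim : Tendsto (fun n : ℕ => q ^ n * y / (1 - q ^ (n + 1))) atTop (𝓝 0) := by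
    simpa [Pi.div_def] using ((tendsto_pow_atTop_nhds_zero_of_abs_lt_one hq).mul_const y).div
      (tendsto_one_sub_pow_succ hq) one_ne_zero
  refine summable_norm_of_ratio_tendsto (by simp) hlim fun n => ?_
  have := (qPoch_pos hq n).ne'
  have := (one_sub_pow_succ_pos hq n).ne'
  rw [Nat.triangle_succ, qPoch_succ, smul_eq_mul]
  field_simp
  ring

theorem hahnAdd_div_qPoch (hq : |q| < 1) (x y : ℝ) (n : ℕ) :
    hahnAdd q x y n / qPoch q n = ∑ k ∈ range (n + 1),
      q ^ (k * (k - 1) / 2) * y ^ k / qPoch q k * (x ^ (n - k) / qPoch q (n - k)) := by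
  rw [hahnAdd, mul_div_cancel_left₀ _ (qPoch_pos hq n).ne']
  refine sum_congr rfl fun k _ => ?_
  ring

end qPochhammer

theorem eq_Eq_hahn (q x y : ℝ) (hq : 0 < q) (hq1 : q < 1) (hx : |x| < 1) :
    (∑' k : ℕ, x ^ k / qPoch q k) *
      (∑' k : ℕ, q ^ (k * (k - 1) / 2) * y ^ k / qPoch q k) =
    ∑' n : ℕ, hahnAdd q x y n / qPoch q n := by
  have hq' : |q| < 1 := abs_lt.2 ⟨by linarith, hq1⟩
  rw [mul_comm, tsum_mul_tsum_eq_tsum_sum_range_of_summable_norm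
    (summable_norm_bigQExp_term hq' y) (summable_norm_smallQExp_term hq' hx)]
  exact tsum_congr fun n => (hahnAdd_div_qPoch hq' x y n).symm
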